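/- Let n ≥ 2, let ω₁ < ω₂ < ⋯ < ω_n be real numbers and let A₁, …, A_n be nonzero complex numbers, and define g(z) = Σ_{j=1}^n A_j · exp(ω_j · z). Then g has infinitely many zeros; i.e., the set {z ∈ ℂ : g(z) = 0} is infinite. -/

import Mathlib

/-!
Vertical translates of an exponential sum are again exponential sums: shifting by `y * I`
multiplies the coefficients by the phases `exp (ω j * y * I)`. These phases lie in a compact torus
and come back arbitrarily close to `1` for arbitrarily large `y`, so by Hurwitz's theorem every
zero of `g` reappears arbitrarily high up, and the zeros have unbounded imaginary parts.

A first zero exists because `g` takes arbitrarily small values in some vertical strip: otherwise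
`g' / g` would be bounded (outside a strip the extreme exponents dominate), hence constant by
Liouville, which forces all exponents to coincide. By compactness of the strip times the closure
of the phases, some limit of translates vanishes in the strip, and Hurwitz carries this zero back
to a translate of `g` itself.
-/

open Complex Filter Function Metric Set Topology

theorem exists_mem_ball_eq_zero_of_norm_lt {f : ℂ → ℂ} (hf : Differentiable ℂ f) {c : ℂ} {r : ℝ}
    (hr : 0 < r) (h : ∀ z ∈ sphere c r, ‖f c‖ < ‖f z‖) : ∃ w ∈ ball c r, f w = 0 := by
  obtain ⟨w, hw, hmin⟩ := exists_isLocalMin_mem_ball (f := norm ∘ f)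
    (continuous_norm.comp hf.continuous).continuousOn (mem_closedBall_self hr.le) h
  refine ⟨w, hw, (eventually_eq_or_eq_zero_of_isLocalMin_norm
    (.of_forall fun z => hf z) hmin).resolve_left fun hloc => ?_⟩
  have hanalytic : AnalyticOnNhd ℂ f univ := analyticOnNhd_univ_iff_differentiable.2 hf
  have hconst : EqOn f (fun _ => f w) univ :=
    hanalytic.eqOn_of_preconnected_of_eventuallyEq analyticOnNhd_const
      (isPreconnected_univ (α := ℂ)) (mem_univ w) hloc
  obtain ⟨z, hz⟩ := (NormedSpace.sphere_nonempty (x := c)).2 hr.le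
  simpa [hconst (mem_univ c), hconst (mem_univ z)] using h z hz

theorem eventually_exists_mem_ball_eq_zero {X : Type*} [TopologicalSpace X] {F : X → ℂ → ℂ}
    (hF : Continuous (uncurry F)) (hFd : ∀ x, Differentiable ℂ (F x)) {x₀ : X} {c : ℂ}
    (hc : F x₀ c = 0) (hne : ∃ z, F x₀ z ≠ 0) {r : ℝ} (hr : 0 < r) :
    ∀ᶠ x in 𝓝 x₀, ∃ w ∈ ball c r, F x w = 0 := by
  obtain ⟨ρ, hρ, hρr, hsphere⟩ : ∃ ρ, 0 < ρ ∧ ρ < r ∧ ∀ z ∈ sphere c ρ, F x₀ z ≠ 0 := by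
    have hanalytic : AnalyticOnNhd ℂ (F x₀) univ :=
      analyticOnNhd_univ_iff_differentiable.2 (hFd x₀)
    have hisolated : ∀ᶠ z in 𝓝[≠] c, F x₀ z ≠ 0 :=
      (hanalytic c (mem_univ c)).eventually_eq_zero_or_eventually_ne_zero.resolve_left fun h =>
        hne.elim fun z hz => hz (hanalytic.eqOn_zero_of_preconnected_of_eventuallyEq_zero
          isPreconnected_univ (mem_univ c) h (mem_univ z))
    obtain ⟨ε, hε, hball⟩ := Metric.eventually_nhds_iff.1 (eventually_nhdsWithin_iff.1 hisolated)
    refine ⟨min ε r / 2, by positivity, by linarith [min_le_right ε r], fun z hz => ?_⟩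
    have hzc : dist z c = min ε r / 2 := hz
    exact hball (by linarith [min_le_left ε r]) (ne_of_mem_sphere hz (by positivity))
  obtain ⟨z₁, hz₁, hmin⟩ := (isCompact_sphere c ρ).exists_isMinOn
    (NormedSpace.sphere_nonempty.2 hρ.le) (continuous_norm.comp (hFd x₀).continuous).continuousOn
  set m := ‖F x₀ z₁‖
  have hm : 0 < m := norm_pos_iff.2 (hsphere z₁ hz₁)
  -- tube lemma
  have hclose : ∀ᶠ x in 𝓝 x₀, ∀ z ∈ closedBall c ρ, ‖F x z - F x₀ z‖ < m / 2 :=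
    (isCompact_closedBall c ρ).eventually_forall_of_forall_eventually fun z _ => by
      have hcont : Continuous fun p : X × ℂ => ‖F p.1 p.2 - F x₀ p.2‖ :=
        (hF.sub ((hFd x₀).continuous.comp continuous_snd)).norm
      exact hcont.continuousAt.eventually_lt continuousAt_const (by simpa using half_pos hm)
  filter_upwards [hclose] with x hx
  obtain ⟨w, hw, hw0⟩ := exists_mem_ball_eq_zero_of_norm_lt (hFd x) hρ fun z hz => by
    have hc' := hx c (mem_closedBall_self hρ.le)
    rw [hc, sub_zero] at hc'
    have hz' := hx z (sphere_subset_closedBall hz)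
    have hmz : m ≤ ‖F x₀ z‖ := hmin hz
    linarith [norm_sub_norm_le (F x₀ z) (F x z), norm_sub_rev (F x₀ z) (F x z)]
  exact ⟨w, ball_subset_ball hρr.le hw, hw0⟩

section

variable {ι : Type*}

noncomputable def phases (ω : ι → ℝ) (y : ℝ) : ι → ℂ :=
  fun j => exp (ω j * y * I)

theorem norm_phases_apply (ω : ι → ℝ) (y : ℝ) (j : ι) : ‖phases ω y j‖ = 1 := by
  rw [phases, ← ofReal_mul, norm_exp_ofReal_mul_I]

variable [Fintype ι]

noncomputable def expSum (A : ι → ℂ) (ω : ι → ℝ) (z : ℂ) : ℂ :=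
  ∑ j, A j * exp (ω j * z)

theorem expSum_add_mul_I (A : ι → ℂ) (ω : ι → ℝ) (z : ℂ) (y : ℝ) :
    expSum A ω (z + y * I) = expSum (A * phases ω y) ω z := by
  refine Finset.sum_congr rfl fun j _ => ?_
  rw [Pi.mul_apply, phases, mul_assoc, ← exp_add]
  ring_nf

theorem expSum_neg (A : ι → ℂ) (ω : ι → ℝ) (z : ℂ) : expSum A (-ω) (-z) = expSum A ω z := by
  simp [expSum]

theorem norm_exp_ofReal_mul (a : ℝ) (z : ℂ) : ‖exp (a * z)‖ = Real.exp (a * z.re) := by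
  rw [norm_exp, re_ofReal_mul]

theorem norm_expSum_le (A : ι → ℂ) (ω : ι → ℝ) (z : ℂ) :
    ‖expSum A ω z‖ ≤ ∑ j, ‖A j‖ * Real.exp (ω j * z.re) :=
  (norm_sum_le _ _).trans_eq <| by simp only [norm_mul, norm_exp_ofReal_mul]

theorem hasDerivAt_expSum (A : ι → ℂ) (ω : ι → ℝ) (z : ℂ) :
    HasDerivAt (expSum A ω) (expSum (fun j => A j * ω j) ω z) z := by
  refine HasDerivAt.fun_sum fun j _ => ?_
  have h := ((hasDerivAt_id' z).const_mul (ω j : ℂ)).cexp.const_mul (A j)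
  rw [mul_one] at h
  exact h.congr_deriv (by ring)

theorem differentiable_expSum (A : ι → ℂ) (ω : ι → ℝ) : Differentiable ℂ (expSum A ω) :=
  fun z => (hasDerivAt_expSum A ω z).differentiableAt

theorem exists_norm_mul_exp_le_two_mul_norm_expSum {A : ι → ℂ} {ω : ι → ℝ} {k : ι}
    (hk : A k ≠ 0) (hdom : ∀ j ≠ k, A j ≠ 0 → ω j < ω k) :
    ∃ X, ∀ z : ℂ, X ≤ z.re → ‖A k‖ * Real.exp (ω k * z.re) ≤ 2 * ‖expSum A ω z‖ := by
  classical
  set tail : ℝ → ℝ := fun x => ∑ j ∈ Finset.univ.erase k, ‖A j‖ * Real.exp ((ω j - ω k) * x)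
  have htail : Tendsto tail atTop (𝓝 0) := by
    rw [← Finset.sum_const_zero (s := Finset.univ.erase k)]
    refine tendsto_finsetSum _ fun j hj => ?_
    by_cases hAj : A j = 0
    · simp [hAj]
    have hneg : ω j - ω k < 0 := sub_neg.2 (hdom j (Finset.ne_of_mem_erase hj) hAj)
    simpa using (Real.tendsto_exp_atBot.comp
      (tendsto_id.const_mul_atTop_of_neg hneg)).const_mul ‖A j‖
  obtain ⟨X, hX⟩ := eventually_atTop.1 (htail.eventually_le_const (half_pos (norm_pos_iff.2 hk)))
  refine ⟨X, fun z hz => ?_⟩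
  have hsplit : expSum A ω z
      = A k * exp (ω k * z) + ∑ j ∈ Finset.univ.erase k, A j * exp (ω j * z) :=
    (Finset.add_sum_erase _ _ (Finset.mem_univ k)).symm
  have hrest : ‖∑ j ∈ Finset.univ.erase k, A j * exp (ω j * z)‖
      ≤ tail z.re * Real.exp (ω k * z.re) := by
    refine (norm_sum_le _ _).trans_eq ?_
    rw [Finset.sum_mul]
    refine Finset.sum_congr rfl fun j _ => ?_
    rw [norm_mul, norm_exp_ofReal_mul, mul_assoc, ← Real.exp_add]
    ring_nf
  have hmain : ‖A k‖ * Real.exp (ω k * z.re)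
      ≤ ‖expSum A ω z‖ + ‖∑ j ∈ Finset.univ.erase k, A j * exp (ω j * z)‖ := by
    rw [← norm_exp_ofReal_mul, ← norm_mul, eq_sub_of_add_eq hsplit.symm]
    exact norm_sub_le _ _
  nlinarith [hX z.re hz, Real.exp_pos (ω k * z.re)]

theorem eq_zero_of_forall_expSum_eq_zero {A : ι → ℂ} {ω : ι → ℝ} (hω : Injective ω)
    (h : ∀ z, expSum A ω z = 0) : A = 0 := by
  classical
  by_contra hA
  obtain ⟨j, hj⟩ := Function.ne_iff.1 hA
  obtain ⟨k, hk, hmax⟩ :=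
    Finset.exists_max_image (Finset.univ.filter (A · ≠ 0)) ω ⟨j, by simpa using hj⟩
  have hAk : A k ≠ 0 := (Finset.mem_filter.1 hk).2
  obtain ⟨X, hX⟩ := exists_norm_mul_exp_le_two_mul_norm_expSum hAk fun j hjk hAj =>
    (hmax j (by simpa using hAj)).lt_of_ne (hω.ne hjk)
  have := hX X (by simp)
  rw [h, norm_zero, mul_zero] at this
  exact this.not_gt (by positivity)

theorem exists_eq_const_mul_of_norm_le {f g : ℂ → ℂ} (hf : Differentiable ℂ f)
    (hg : Differentiable ℂ g) (hg0 : ∀ z, g z ≠ 0) {C : ℝ} (hC : ∀ z, ‖f z‖ ≤ C * ‖g z‖) :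
    ∃ c, ∀ z, f z = c * g z := by
  have hbdd : Bornology.IsBounded (range (f / g)) :=
    isBounded_iff_forall_norm_le.2 ⟨C, by
      rintro _ ⟨z, rfl⟩
      rw [Pi.div_apply, norm_div, div_le_iff₀ (norm_pos_iff.2 (hg0 z))]
      exact hC z⟩
  refine ⟨f 0 / g 0, fun z => ?_⟩
  have hconst := (hf.div hg hg0).apply_eq_apply_of_bounded hbdd z 0
  rw [Pi.div_apply, Pi.div_apply] at hconst
  rw [← hconst, div_mul_cancel₀ _ (hg0 z)]

theorem exists_expSum_ne_zero_and_norm_le {A : ι → ℂ} {ω : ι → ℝ} {k : ι} (hk : A k ≠ 0)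
    (hmax : ∀ j ≠ k, ω j < ω k) (B : ι → ℂ) :
    ∃ X C, ∀ z : ℂ, X ≤ z.re → expSum A ω z ≠ 0 ∧ ‖expSum B ω z‖ ≤ C * ‖expSum A ω z‖ := by
  obtain ⟨X, hX⟩ := exists_norm_mul_exp_le_two_mul_norm_expSum hk fun j hj _ => hmax j hj
  refine ⟨max X 0, 2 * (∑ j, ‖B j‖) / ‖A k‖, fun z hz => ?_⟩
  have hAk : 0 < ‖A k‖ := norm_pos_iff.2 hk
  have hdom := hX z (le_of_max_le_left hz)
  have hexp := Real.exp_pos (ω k * z.re)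
  have hB : ‖expSum B ω z‖ ≤ (∑ j, ‖B j‖) * Real.exp (ω k * z.re) := by
    refine (norm_expSum_le B ω z).trans ?_
    rw [Finset.sum_mul]
    refine Finset.sum_le_sum fun j _ => mul_le_mul_of_nonneg_left ?_ (norm_nonneg _)
    rcases eq_or_ne j k with rfl | hj
    · rfl
    exact Real.exp_le_exp.2 <|
      mul_le_mul_of_nonneg_right (hmax j hj).le (le_of_max_le_right hz)
  refine ⟨norm_pos_iff.1 (by nlinarith), hB.trans ?_⟩
  rw [div_mul_eq_mul_div, le_div_iff₀ hAk]
  nlinarith [Finset.sum_nonneg fun j (_ : j ∈ Finset.univ) => norm_nonneg (B j)]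

theorem exists_norm_expSum_le_of_abs_re_le (B : ι → ℂ) (ω : ι → ℝ) (M : ℝ) :
    ∃ D, ∀ z : ℂ, |z.re| ≤ M → ‖expSum B ω z‖ ≤ D := by
  have hcont : Continuous fun x : ℝ => ∑ j, ‖B j‖ * Real.exp (ω j * x) := by fun_prop
  obtain ⟨D, hD⟩ := (isCompact_Icc (a := -M) (b := M)).bddAbove_image hcont.continuousOn
  exact ⟨D, fun z hz => (norm_expSum_le B ω z).trans (hD ⟨z.re, abs_le.1 hz, rfl⟩)⟩

theorem exists_forall_exists_norm_expSum_lt [Nontrivial ι] {A : ι → ℂ} {ω : ι → ℝ}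
    (hω : Injective ω) (hA : ∀ j, A j ≠ 0) :
    ∃ M, ∀ m > 0, ∃ z : ℂ, |z.re| ≤ M ∧ ‖expSum A ω z‖ < m := by
  obtain ⟨kmax, -, hkmax⟩ := Finset.exists_max_image Finset.univ ω Finset.univ_nonempty
  obtain ⟨kmin, -, hkmin⟩ := Finset.exists_min_image Finset.univ ω Finset.univ_nonempty
  set B : ι → ℂ := fun j => A j * ω j
  obtain ⟨Xr, Cr, hright⟩ := exists_expSum_ne_zero_and_norm_le (hA kmax)
    (fun j hj => (hkmax j (Finset.mem_univ j)).lt_of_ne (hω.ne hj)) B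
  obtain ⟨Xl, Cl, hleft⟩ := exists_expSum_ne_zero_and_norm_le (ω := -ω) (hA kmin)
    (fun j hj => neg_lt_neg ((hkmin j (Finset.mem_univ j)).lt_of_ne (hω.ne hj).symm)) B
  refine ⟨max Xr Xl, fun m hm => ?_⟩
  by_contra! hstrip
  obtain ⟨D, hD⟩ := exists_norm_expSum_le_of_abs_re_le B ω (max Xr Xl)
  -- `expSum B ω` is the derivative; the ratio is bounded by dominance off the strip and `hstrip`
  have hbound : ∀ z, expSum A ω z ≠ 0 ∧
      ‖expSum B ω z‖ ≤ max (max Cr Cl) (D / m) * ‖expSum A ω z‖ := by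
    intro z
    rcases le_or_gt Xr z.re with hz | hz
    · obtain ⟨h0, hle⟩ := hright z hz
      exact ⟨h0, hle.trans <| mul_le_mul_of_nonneg_right
        ((le_max_left _ _).trans (le_max_left _ _)) (norm_nonneg _)⟩
    rcases le_or_gt Xl (-z).re with hz' | hz'
    · obtain ⟨h0, hle⟩ := hleft (-z) hz'
      simp only [expSum_neg] at h0 hle
      exact ⟨h0, hle.trans <| mul_le_mul_of_nonneg_right
        ((le_max_right _ _).trans (le_max_left _ _)) (norm_nonneg _)⟩
    have hzM : |z.re| ≤ max Xr Xl := by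
      rw [neg_re] at hz'
      exact abs_le.2 ⟨by linarith [le_max_right Xr Xl], by linarith [le_max_left Xr Xl]⟩
    have hSm := hstrip z hzM
    have hD0 : 0 ≤ D / m := div_nonneg ((norm_nonneg _).trans (hD z hzM)) hm.le
    refine ⟨norm_pos_iff.1 (hm.trans_le hSm), (hD z hzM).trans ?_⟩
    calc D = D / m * m := (div_mul_cancel₀ D hm.ne').symm
      _ ≤ max (max Cr Cl) (D / m) * ‖expSum A ω z‖ :=
        mul_le_mul (le_max_right _ _) hSm hm.le (hD0.trans (le_max_right _ _))
  obtain ⟨c, hc⟩ := exists_eq_const_mul_of_norm_le (differentiable_expSum B ω)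
    (differentiable_expSum A ω) (fun z => (hbound z).1) fun z => (hbound z).2
  have hzero : (fun j => A j * (ω j - c)) = 0 := by
    refine eq_zero_of_forall_expSum_eq_zero hω fun z => ?_
    have := hc z
    simp only [expSum, B, Finset.mul_sum] at this ⊢
    rw [← sub_eq_zero.2 this, ← Finset.sum_sub_distrib]
    exact Finset.sum_congr rfl fun j _ => by ring
  have hωc : ∀ j, (ω j : ℂ) = c := fun j =>
    sub_eq_zero.1 ((mul_eq_zero.1 (congr_fun hzero j)).resolve_left (hA j))
  obtain ⟨i, j, hij⟩ := exists_pair_ne ι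
  exact hij (hω (ofReal_injective ((hωc i).trans (hωc j).symm)))

theorem isBounded_range_phases (ω : ι → ℝ) : Bornology.IsBounded (range (phases ω)) :=
  isBounded_iff_forall_norm_le.2 ⟨1, by
    rintro _ ⟨y, rfl⟩
    exact (pi_norm_le_iff_of_nonneg zero_le_one).2 fun j => (norm_phases_apply ω y j).le⟩

theorem dist_phases (ω : ι → ℝ) (s t : ℝ) :
    dist (phases ω s) (phases ω t) = dist (phases ω (s - t)) 1 := by
  have hmul : ∀ j, phases ω s j = phases ω (s - t) j * phases ω t j := fun j => by
    simp only [phases, ← exp_add]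
    push_cast
    ring_nf
  simp only [dist_pi_def]
  congr 2
  ext j
  rw [coe_nndist, coe_nndist, hmul, Pi.one_apply, dist_eq_norm, dist_eq_norm, ← sub_one_mul,
    norm_mul, norm_phases_apply, mul_one]

theorem mapClusterPt_one_phases_atTop (ω : ι → ℝ) : MapClusterPt 1 atTop (phases ω) := by
  refine mapClusterPt_iff_frequently.2 fun N hN => frequently_atTop.2 fun Y => ?_
  obtain ⟨ε, hε, hball⟩ := Metric.mem_nhds_iff.1 hN
  set T := max Y 1
  have hT : 0 < T := one_pos.trans_le (le_max_right _ _)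
  obtain ⟨_, -, φ, hφ, hlim⟩ := tendsto_subseq_of_bounded (isBounded_range_phases ω)
    fun k : ℕ => mem_range_self (k * T)
  obtain ⟨K, hK⟩ := Metric.cauchySeq_iff'.1 hlim.cauchySeq ε hε
  have hgap : (φ K : ℝ) + 1 ≤ φ (K + 1) := by exact_mod_cast hφ K.lt_succ_self
  refine ⟨(φ (K + 1) - φ K) * T, ?_, hball ?_⟩
  · nlinarith [le_max_left Y 1]
  · rw [mem_ball, sub_mul, ← dist_phases]
    exact hK (K + 1) K.le_succ

theorem eventually_exists_mem_ball_expSum_mul_eq_zero {A : ι → ℂ} {ω : ι → ℝ} (hω : Injective ω)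
    {u₀ : ι → ℂ} (hAu₀ : A * u₀ ≠ 0) {c : ℂ} (hc : expSum (A * u₀) ω c = 0) :
    ∀ᶠ u in 𝓝 u₀, ∃ w ∈ ball c 1, expSum (A * u) ω w = 0 := by
  refine eventually_exists_mem_ball_eq_zero (F := fun u => expSum (A * u) ω) ?_
    (fun u => differentiable_expSum _ ω) hc ?_ one_pos
  · unfold expSum uncurry
    fun_prop
  · by_contra! h
    exact hAu₀ (eq_zero_of_forall_expSum_eq_zero hω h)

theorem exists_expSum_eq_zero [Nontrivial ι] {A : ι → ℂ} {ω : ι → ℝ} (hω : Injective ω)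
    (hA : ∀ j, A j ≠ 0) : ∃ z, expSum A ω z = 0 := by
  obtain ⟨M, hM⟩ := exists_forall_exists_norm_expSum_lt hω hA
  set K := closure (range (phases ω))
  have hKunit : K ⊆ {u | ∀ j, ‖u j‖ = 1} := by
    refine closure_minimal ?_ <| ofPred_forall (fun j (u : ι → ℂ) => ‖u j‖ = 1) ▸
      isClosed_iInter fun j => isClosed_eq (continuous_apply j).norm continuous_const
    rintro _ ⟨y, rfl⟩
    exact norm_phases_apply ω y
  have hmemK : ∀ z : ℂ, |z.re| ≤ M → (z.re, phases ω z.im) ∈ Icc (-M) M ×ˢ K :=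
    fun z hz => ⟨abs_le.1 hz, subset_closure (mem_range_self _)⟩
  have hnorm : ∀ z : ℂ, ‖expSum A ω z‖ = ‖expSum (A * phases ω z.im) ω z.re‖ := fun z => by
    rw [← expSum_add_mul_I, re_add_im]
  -- `(x, u) ↦ expSum (A * u) ω x` covers the translates of `expSum A ω` and their limits
  obtain ⟨z₁, hz₁, -⟩ := hM 1 one_pos
  obtain ⟨⟨x₀, u₀⟩, ⟨-, hu₀⟩, hmin⟩ :=
    ((isCompact_Icc (a := -M) (b := M)).prod (isBounded_range_phases ω).isCompact_closure)
      |>.exists_isMinOn ⟨_, hmemK z₁ hz₁⟩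
      (f := fun p : ℝ × (ι → ℂ) => ‖expSum (A * p.2) ω p.1‖) (by unfold expSum; fun_prop)
  have hzero : expSum (A * u₀) ω x₀ = 0 := by
    by_contra h
    obtain ⟨z, hzM, hz⟩ := hM _ (norm_pos_iff.2 h)
    have hle := isMinOn_iff.1 hmin _ (hmemK z hzM)
    dsimp only at hle
    rw [← hnorm] at hle
    exact hz.not_ge hle
  have hAu₀ : A * u₀ ≠ 0 := fun h => by
    obtain ⟨j⟩ := (inferInstance : Nonempty ι)
    have := congr_fun h j
    simp only [Pi.mul_apply, Pi.zero_apply, mul_eq_zero, hA j, false_or] at this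
    simpa [this] using hKunit hu₀ j
  obtain ⟨_, ⟨w, -, hw⟩, v, rfl⟩ := mem_closure_iff_nhds.1 hu₀ _
    (eventually_exists_mem_ball_expSum_mul_eq_zero hω hAu₀ hzero)
  exact ⟨w + v * I, by rwa [expSum_add_mul_I]⟩

theorem exists_expSum_eq_zero_and_le_im [Nontrivial ι] {A : ι → ℂ} {ω : ι → ℝ}
    (hω : Injective ω) (hA : ∀ j, A j ≠ 0) (Y : ℝ) : ∃ z, expSum A ω z = 0 ∧ Y ≤ z.im := by
  obtain ⟨z₀, hz₀⟩ := exists_expSum_eq_zero hω hA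
  have hA0 : A * 1 ≠ 0 := fun h => hA (Classical.arbitrary ι) (by simpa using congr_fun h _)
  obtain ⟨y, ⟨w, hw, hw0⟩, hy⟩ := ((mapClusterPt_iff_frequently.1
    (mapClusterPt_one_phases_atTop ω) _ (eventually_exists_mem_ball_expSum_mul_eq_zero hω hA0
      (by rwa [mul_one]))).and_eventually (eventually_ge_atTop (Y + 1 - z₀.im))).exists
  refine ⟨w + y * I, by rwa [expSum_add_mul_I], ?_⟩
  have hwz : |(w - z₀).im| < 1 := (abs_im_le_norm _).trans_lt (mem_ball_iff_norm.1 hw)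
  simp only [sub_im, add_im, mul_im, ofReal_re, I_im, ofReal_im, I_re] at hwz ⊢
  linarith [(abs_lt.1 hwz).1]

end

/-- An exponential sum `g z = ∑ j, A j * exp (ω j * z)` with at least two terms,
nonzero coefficients and strictly increasing real exponents has infinitely many
zeros. -/
theorem exp_sum_infinitely_many_zeros
    (n : ℕ) (hn : 2 ≤ n)
    (ω : Fin n → ℝ) (hω : StrictMono ω)
    (A : Fin n → ℂ) (hA : ∀ j, A j ≠ 0)
    (g : ℂ → ℂ)
    (hg : ∀ z : ℂ, g z = ∑ j : Fin n, A j * Complex.exp ((ω j : ℂ) * z)) :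
    {z : ℂ | g z = 0}.Infinite := by
  have : Nontrivial (Fin n) := Fin.nontrivial_iff_two_le.2 hn
  obtain rfl : g = expSum A ω := funext hg
  intro hfinite
  obtain ⟨Y, hY⟩ := (hfinite.image im).bddAbove
  obtain ⟨z, hz, hYz⟩ := exists_expSum_eq_zero_and_le_im hω.injective hA (Y + 1)
  linarith [hY (mem_image_of_mem im hz)]
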